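/- For any real m×n matrix X of rank at most k, the squared Frobenius distance to W is bounded below by the tail of squared singular values: ‖W − X‖_F² ≥ Σ_{i=k+1}^{min(m,n)} σ_i(W)². -/

import Mathlib

open Finset Matrix

/-- `sval A i` is the `(i+1)`-th largest singular value of `A` (0-indexed), obtained by
sorting the eigenvalues of `Aᵀ * A` and taking square roots; it is `0` out of range. -/
noncomputable def sval {m n : ℕ} (A : Matrix (Fin m) (Fin n) ℝ) (i : ℕ) : ℝ :=
  if h : i < n then
    Real.sqrt ((Matrix.isHermitian_conjTranspose_mul_self A).eigenvalues
      (Tuple.sort (Matrix.isHermitian_conjTranspose_mul_self A).eigenvalues (Fin.rev ⟨i, h⟩)))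
  else 0

/-- Squared Frobenius norm of a matrix. -/
def frobSq {m n : ℕ} (A : Matrix (Fin m) (Fin n) ℝ) : ℝ := ∑ i, ∑ j, (A i j) ^ 2

/- ----------------- auxiliary lemmas ----------------- -/

lemma frobSq_eq_trace {m n : ℕ} (A : Matrix (Fin m) (Fin n) ℝ) :
    frobSq A = (Aᴴ * A).trace := by
  simp only [frobSq, Matrix.trace, Matrix.diag, Matrix.mul_apply, Matrix.conjTranspose_apply,
    star_trivial, sq]
  rw [Finset.sum_comm]

lemma frobSq_nonneg {m n : ℕ} (A : Matrix (Fin m) (Fin n) ℝ) : 0 ≤ frobSq A :=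
  Finset.sum_nonneg fun _ _ => Finset.sum_nonneg fun _ _ => sq_nonneg _

lemma diag_conjTranspose_mul_self_nonneg {m n : ℕ} (M : Matrix (Fin m) (Fin n) ℝ) (i : Fin n) :
    0 ≤ (Mᴴ * M) i i := by
  simp only [Matrix.mul_apply, Matrix.conjTranspose_apply, star_trivial]
  exact Finset.sum_nonneg fun j _ => mul_self_nonneg _

/-- Combinatorial core of the Ky Fan inequality. -/
lemma kyfan_comb {n k : ℕ} (g t : Fin n → ℝ) (hga : ∀ i j : Fin n, i ≤ j → g j ≤ g i)
    (hg : ∀ i, 0 ≤ g i) (ht0 : ∀ i, 0 ≤ t i) (ht1 : ∀ i, t i ≤ 1)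
    (hts : ∑ i, t i ≤ (k : ℝ)) :
    ∑ i, g i * t i ≤ ∑ i : Fin n, if (i : ℕ) < k then g i else 0 := by
  classical
  set S : Finset (Fin n) := Finset.univ.filter (fun i => (i:ℕ) < k) with hS
  have hRHS : ∑ i : Fin n, (if (i:ℕ) < k then g i else 0) = ∑ i ∈ S, g i :=
    (Finset.sum_filter _ _).symm
  have hsplit : ∑ i, g i * t i = ∑ i ∈ S, g i * t i + ∑ i ∈ Sᶜ, g i * t i :=
    (Finset.sum_add_sum_compl S _).symm
  rw [hRHS, hsplit]
  have key : ∑ i ∈ Sᶜ, g i * t i ≤ ∑ i ∈ S, g i * (1 - t i) := by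
    rcases le_or_gt n k with hnk | hkn
    · have hSc : Sᶜ = ∅ := by
        ext i
        simp only [Finset.mem_compl, hS, Finset.mem_filter, Finset.mem_univ, true_and,
          Finset.notMem_empty, iff_false, not_not]
        exact lt_of_lt_of_le i.isLt hnk
      rw [hSc, Finset.sum_empty]
      exact Finset.sum_nonneg fun i _ => mul_nonneg (hg i) (by linarith [ht1 i])
    · set c : Fin n := ⟨k, hkn⟩ with hc
      have hcard : S.card = k := by
        have himg : S.image (fun i : Fin n => (i:ℕ)) = Finset.range k := by
          ext a
          simp only [Finset.mem_image, Finset.mem_range, hS, Finset.mem_filter,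
            Finset.mem_univ, true_and]
          constructor
          · rintro ⟨i, hi, rfl⟩; exact hi
          · intro ha; exact ⟨⟨a, ha.trans hkn⟩, ha, rfl⟩
        have h2 := Finset.card_image_of_injective S (Fin.val_injective)
        rw [himg, Finset.card_range] at h2
        omega
      have h1 : ∑ i ∈ Sᶜ, g i * t i ≤ g c * ∑ i ∈ Sᶜ, t i := by
        rw [Finset.mul_sum]
        refine Finset.sum_le_sum fun i hi => ?_
        have hik : ¬ ((i:ℕ) < k) := by
          simpa [hS] using hi
        have hci : c ≤ i := by
          simp only [Fin.le_def, hc]; omega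
        exact mul_le_mul_of_nonneg_right (hga c i hci) (ht0 i)
      have h2 : ∑ i ∈ Sᶜ, t i ≤ (k:ℝ) - ∑ i ∈ S, t i := by
        have h := Finset.sum_add_sum_compl S t
        linarith
      have h3 : (k:ℝ) - ∑ i ∈ S, t i = ∑ i ∈ S, (1 - t i) := by
        rw [Finset.sum_sub_distrib, Finset.sum_const, hcard, nsmul_eq_mul, mul_one]
      have h4 : g c * ∑ i ∈ S, (1 - t i) ≤ ∑ i ∈ S, g i * (1 - t i) := by
        rw [Finset.mul_sum]
        refine Finset.sum_le_sum fun i hi => ?_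
        have hik : (i:ℕ) < k := by simpa [hS] using hi
        have hic : i ≤ c := by simp only [Fin.le_def, hc]; omega
        exact mul_le_mul_of_nonneg_right (hga i c hic) (by linarith [ht1 i])
      calc ∑ i ∈ Sᶜ, g i * t i ≤ g c * ∑ i ∈ Sᶜ, t i := h1
        _ ≤ g c * ((k:ℝ) - ∑ i ∈ S, t i) := mul_le_mul_of_nonneg_left h2 (hg c)
        _ = g c * ∑ i ∈ S, (1 - t i) := by rw [h3]
        _ ≤ ∑ i ∈ S, g i * (1 - t i) := h4
  have hfin : ∑ i ∈ S, g i * t i + ∑ i ∈ S, g i * (1 - t i) = ∑ i ∈ S, g i := by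
    rw [← Finset.sum_add_distrib]
    exact Finset.sum_congr rfl fun i _ => by ring
  linarith

/-- Existence of the orthogonal projection onto the row space of `X`. -/
lemma exists_proj {m n : ℕ} (X : Matrix (Fin m) (Fin n) ℝ) :
    ∃ Q : Matrix (Fin n) (Fin n) ℝ,
      Qᴴ = Q ∧ Q * Q = Q ∧ X * Q = X ∧ Q.trace = (X.rank : ℝ) := by
  classical
  set E := EuclideanSpace ℝ (Fin n)
  set f : EuclideanSpace ℝ (Fin m) →ₗ[ℝ] E := Matrix.toEuclideanLin Xᵀ with hf
  set U : Submodule ℝ E := LinearMap.range f with hU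
  set p : E →ₗ[ℝ] E := ↑(U.subtypeL ∘L U.orthogonalProjectionOnto) with hp
  have hsymm : p.IsSymmetric := U.starProjection_isSymmetric
  have hfix : ∀ u ∈ U, p u = u := by
    intro u hu
    show (U.subtypeL ∘L U.orthogonalProjectionOnto : E →L[ℝ] E) u = u
    simp only [ContinuousLinearMap.comp_apply]
    rw [show u = ((⟨u, hu⟩ : U) : E) from rfl, Submodule.orthogonalProjectionOnto_mem_subspace_eq_self]
    rfl
  have hmem : ∀ x : E, p x ∈ U := fun x => SetLike.coe_mem _
  set Q : Matrix (Fin n) (Fin n) ℝ := Matrix.toEuclideanLin.symm p with hQ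
  have hQp : Matrix.toEuclideanLin Q = p := Matrix.toEuclideanLin.apply_symm_apply p
  refine ⟨Q, ?_, ?_, ?_, ?_⟩
  · exact Matrix.isHermitian_iff_isSymmetric.2 (by rw [hQp]; exact hsymm)
  · apply Matrix.toEuclideanLin.injective
    rw [Matrix.toEuclideanLin_eq_toLin,
      Matrix.toLin_mul (PiLp.basisFun 2 ℝ (Fin n)) (PiLp.basisFun 2 ℝ (Fin n))
        (PiLp.basisFun 2 ℝ (Fin n)) Q Q,
      ← Matrix.toEuclideanLin_eq_toLin, hQp]
    exact LinearMap.ext fun x => hfix (p x) (hmem x)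
  · have hQX : Q * Xᵀ = Xᵀ := by
      apply Matrix.toEuclideanLin.injective
      rw [Matrix.toEuclideanLin_eq_toLin,
        Matrix.toLin_mul (PiLp.basisFun 2 ℝ (Fin m)) (PiLp.basisFun 2 ℝ (Fin n))
          (PiLp.basisFun 2 ℝ (Fin n)) Q Xᵀ,
        ← Matrix.toEuclideanLin_eq_toLin, ← Matrix.toEuclideanLin_eq_toLin, hQp, ← hf]
      exact LinearMap.ext fun x => hfix (f x) (LinearMap.mem_range_self f x)
    have hQsymm : Qᴴ = Q := Matrix.isHermitian_iff_isSymmetric.2 (by rw [hQp]; exact hsymm)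
    have h := congrArg Matrix.transpose hQX
    rw [Matrix.transpose_mul, Matrix.transpose_transpose] at h
    rw [← Matrix.conjTranspose_eq_transpose_of_trivial, hQsymm] at h
    exact h
  · have hproj : LinearMap.IsProj U p := ⟨hmem, hfix⟩
    have htr : LinearMap.trace ℝ E p = (Module.finrank ℝ U : ℝ) := hproj.trace
    have htrQ : Q.trace = LinearMap.trace ℝ E p := by
      rw [LinearMap.trace_eq_matrix_trace ℝ (PiLp.basisFun 2 ℝ (Fin n)) p]
      congr 1
    have hrank : Module.finrank ℝ U = X.rank := by
      rw [← Matrix.rank_transpose X]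
      rw [Matrix.rank_eq_finrank_range_toLin Xᵀ (PiLp.basisFun 2 ℝ (Fin n))
        (PiLp.basisFun 2 ℝ (Fin m))]
      rfl
    rw [htrQ, htr, hrank]

/-- Diagonal weights for the Ky Fan trace inequality. -/
lemma trace_mul_proj {n : ℕ} (A : Matrix (Fin n) (Fin n) ℝ) (hA : A.IsHermitian)
    (Q : Matrix (Fin n) (Fin n) ℝ) (hQs : Qᴴ = Q) (hQi : Q * Q = Q) :
    ∃ t : Fin n → ℝ, (∀ i, 0 ≤ t i) ∧ (∀ i, t i ≤ 1) ∧ (∑ i, t i = Q.trace) ∧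
      (A * Q).trace = ∑ i, hA.eigenvalues i * t i := by
  classical
  set V : Matrix (Fin n) (Fin n) ℝ := ↑(hA.eigenvectorUnitary) with hV
  have hV1 : Vᴴ * V = 1 := Matrix.mem_unitaryGroup_iff'.mp hA.eigenvectorUnitary.2
  have hV2 : V * Vᴴ = 1 := Matrix.mem_unitaryGroup_iff.mp hA.eigenvectorUnitary.2
  set t : Fin n → ℝ := fun i => (Vᴴ * Q * V) i i with ht
  have hspec : A = V * Matrix.diagonal (hA.eigenvalues) * Vᴴ := by
    have := hA.spectral_theorem
    simpa [Matrix.star_eq_conjTranspose] using this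
  refine ⟨t, ?_, ?_, ?_, ?_⟩
  · intro i
    have hrw : Vᴴ * Q * V = (Q * V)ᴴ * (Q * V) := by
      rw [Matrix.conjTranspose_mul, hQs, Matrix.mul_assoc Vᴴ Q (Q * V),
        ← Matrix.mul_assoc Q Q V, hQi, ← Matrix.mul_assoc]
    show 0 ≤ (Vᴴ * Q * V) i i
    rw [hrw]
    exact diag_conjTranspose_mul_self_nonneg _ i
  · intro i
    set R : Matrix (Fin n) (Fin n) ℝ := 1 - Q with hR
    have hRs : Rᴴ = R := by
      rw [hR, Matrix.conjTranspose_sub, Matrix.conjTranspose_one, hQs]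
    have hRi : R * R = R := by
      rw [hR, sub_mul, one_mul, mul_sub, mul_one, hQi]
      abel
    have hrw : Vᴴ * R * V = (R * V)ᴴ * (R * V) := by
      rw [Matrix.conjTranspose_mul, hRs, Matrix.mul_assoc Vᴴ R (R * V),
        ← Matrix.mul_assoc R R V, hRi, ← Matrix.mul_assoc]
    have hRV : Vᴴ * R * V = 1 - Vᴴ * Q * V := by
      rw [hR, mul_sub, mul_one, sub_mul, hV1]
    have h0 : 0 ≤ (1 - Vᴴ * Q * V) i i := by
      rw [← hRV, hrw]
      exact diag_conjTranspose_mul_self_nonneg _ i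
    rw [Matrix.sub_apply, Matrix.one_apply_eq] at h0
    have hti : t i = (Vᴴ * Q * V) i i := rfl
    linarith
  · have h : ∑ i, t i = (Vᴴ * Q * V).trace := rfl
    rw [h, Matrix.mul_assoc, Matrix.trace_mul_comm, Matrix.mul_assoc, hV2, mul_one]
  · have hAQ : A * Q = V * (Matrix.diagonal hA.eigenvalues * (Vᴴ * Q)) := by
      conv_lhs => rw [hspec]
      simp [Matrix.mul_assoc]
    rw [hAQ, Matrix.trace_mul_comm, Matrix.mul_assoc]
    simp [Matrix.trace, Matrix.diag, Matrix.diagonal_mul, ht]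

lemma frobSq_mul_proj {m n : ℕ} (B : Matrix (Fin m) (Fin n) ℝ)
    (Q : Matrix (Fin n) (Fin n) ℝ) (hQs : Qᴴ = Q) (hQi : Q * Q = Q) :
    frobSq (B * Q) = ((Bᴴ * B) * Q).trace := by
  have key : (Q * ((Bᴴ * B) * Q)).trace = ((Bᴴ * B) * Q).trace := by
    rw [Matrix.trace_mul_comm Q ((Bᴴ * B) * Q), Matrix.mul_assoc (Bᴴ * B) Q Q, hQi]
  calc frobSq (B * Q) = ((B * Q)ᴴ * (B * Q)).trace := frobSq_eq_trace _
    _ = (Q * ((Bᴴ * B) * Q)).trace := by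
        rw [Matrix.conjTranspose_mul, hQs]
        congr 1
        simp [Matrix.mul_assoc]
    _ = ((Bᴴ * B) * Q).trace := key

lemma trace_eq_sum_eigenvalues {n : ℕ} (A : Matrix (Fin n) (Fin n) ℝ) (hA : A.IsHermitian) :
    A.trace = ∑ i, hA.eigenvalues i := by
  classical
  set V : Matrix (Fin n) (Fin n) ℝ := ↑(hA.eigenvectorUnitary) with hV
  have hV1 : Vᴴ * V = 1 := Matrix.mem_unitaryGroup_iff'.mp hA.eigenvectorUnitary.2
  have hspec : A = V * Matrix.diagonal (hA.eigenvalues) * Vᴴ := by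
    have := hA.spectral_theorem
    simpa [Matrix.star_eq_conjTranspose] using this
  conv_lhs => rw [hspec]
  rw [Matrix.trace_mul_comm, ← Matrix.mul_assoc, hV1, one_mul, Matrix.trace_diagonal]

/-- For any matrix `X` of rank at most `k`, the squared Frobenius distance from `W` to `X`
is at least the tail sum `∑_{i=k+1}^{min(m,n)} σᵢ(W)²` of squared singular values of `W`. -/
theorem frobSq_sub_ge_tail_singularValues {m n : ℕ}
    (W X : Matrix (Fin m) (Fin n) ℝ) (k : ℕ) (hX : X.rank ≤ k) :
    frobSq (W - X) ≥ ∑ i ∈ Finset.Ico k (min m n), (sval W i) ^ 2 := by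
  classical
  obtain ⟨Q, hQs, hQi, hXQ, hQtr⟩ := exists_proj X
  have hA : (Wᴴ * W).IsHermitian := Matrix.isHermitian_conjTranspose_mul_self W
  set d : Fin n → ℝ := hA.eigenvalues with hddef
  have hd : ∀ i, 0 ≤ d i := Matrix.eigenvalues_conjTranspose_mul_self_nonneg W
  set e : Equiv.Perm (Fin n) := Fin.revPerm.trans (Tuple.sort d) with he
  set g : Fin n → ℝ := fun i => d (Tuple.sort d (Fin.rev i)) with hg
  have hge : ∀ i, g i = d (e i) := fun i => rfl
  have hganti : ∀ i j : Fin n, i ≤ j → g j ≤ g i := fun i j hij =>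
    Tuple.monotone_sort d (Fin.rev_le_rev.mpr hij)
  have hg0 : ∀ i, 0 ≤ g i := fun i => hd _
  -- Ky Fan
  obtain ⟨t, ht0, ht1, hts, htrAQ⟩ := trace_mul_proj (Wᴴ * W) hA Q hQs hQi
  have hQk : Q.trace ≤ (k : ℝ) := by rw [hQtr]; exact_mod_cast hX
  have hkf : ((Wᴴ * W) * Q).trace ≤ ∑ i : Fin n, (if (i:ℕ) < k then g i else 0) := by
    rw [htrAQ]
    have hmain := kyfan_comb g (t ∘ e) hganti hg0 (fun i => ht0 _) (fun i => ht1 _)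
      (by rw [show (∑ i, (t ∘ e) i) = ∑ i, t i from Equiv.sum_comp e t]; linarith)
    calc ∑ i, d i * t i = ∑ i, d (e i) * t (e i) := (Equiv.sum_comp e fun i => d i * t i).symm
      _ = ∑ i, g i * (t ∘ e) i := rfl
      _ ≤ _ := hmain
  -- Frobenius norm chain
  set R : Matrix (Fin n) (Fin n) ℝ := 1 - Q with hR
  have hRs : Rᴴ = R := by rw [hR, Matrix.conjTranspose_sub, Matrix.conjTranspose_one, hQs]
  have hRi : R * R = R := by
    rw [hR, sub_mul, one_mul, mul_sub, mul_one, hQi]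
    abel
  have hXR : X * R = 0 := by rw [hR, Matrix.mul_sub, Matrix.mul_one, hXQ, sub_self]
  have hWXR : (W - X) * R = W * R := by rw [Matrix.sub_mul, hXR, sub_zero]
  have hsplit : frobSq (W - X) = frobSq ((W - X) * Q) + frobSq ((W - X) * R) := by
    rw [frobSq_mul_proj _ _ hQs hQi, frobSq_mul_proj _ _ hRs hRi, ← Matrix.trace_add,
      ← mul_add, hR, add_sub_cancel, mul_one, frobSq_eq_trace]
  have h1 : frobSq (W * R) ≤ frobSq (W - X) := by
    rw [← hWXR]
    have := frobSq_nonneg ((W - X) * Q)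
    linarith [hsplit]
  have h2 : frobSq (W * R) = ((Wᴴ * W)).trace - ((Wᴴ * W) * Q).trace := by
    rw [frobSq_mul_proj _ _ hRs hRi, hR, mul_sub, mul_one, Matrix.trace_sub]
  have htrA : (Wᴴ * W).trace = ∑ i, g i := by
    rw [trace_eq_sum_eigenvalues _ hA, ← Equiv.sum_comp e d]
    exact Finset.sum_congr rfl fun i _ => (hge i).symm
  have h4 : ∑ i, g i - ∑ i : Fin n, (if (i:ℕ) < k then g i else 0)
      = ∑ i : Fin n, (if k ≤ (i:ℕ) then g i else 0) := by
    rw [← Finset.sum_sub_distrib]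
    refine Finset.sum_congr rfl fun i _ => ?_
    by_cases h : (i:ℕ) < k
    · simp [h, Nat.not_le.mpr h]
    · simp [h, Nat.le_of_not_lt h]
  -- relate RHS to the tail of g
  set G : ℕ → ℝ := fun i => if h : i < n then g ⟨i, h⟩ else 0 with hG
  have hGnn : ∀ i, 0 ≤ G i := by
    intro i
    by_cases h : i < n
    · simpa [hG, h] using hg0 ⟨i, h⟩
    · simp [hG, h]
  have h5 : ∀ i ∈ Finset.Ico k (min m n), (sval W i) ^ 2 = G i := by
    intro i hi
    have hin : i < n := lt_of_lt_of_le (Finset.mem_Ico.mp hi).2 (min_le_right m n)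
    simp only [hG, dif_pos hin]
    simp only [sval, dif_pos hin]
    exact Real.sq_sqrt (hd _)
  have h6 : ∑ i ∈ Finset.Ico k (min m n), G i ≤ ∑ i ∈ Finset.Ico k n, G i :=
    Finset.sum_le_sum_of_subset_of_nonneg
      (Finset.Ico_subset_Ico le_rfl (min_le_right m n)) (fun i _ _ => hGnn i)
  have step1 : ∑ i : Fin n, (if k ≤ (i:ℕ) then g i else 0)
      = ∑ i ∈ Finset.range n, (if k ≤ i then G i else 0) := by
    rw [← Fin.sum_univ_eq_sum_range (fun j => if k ≤ j then G j else 0) n]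
    refine Finset.sum_congr rfl fun i _ => ?_
    by_cases h : k ≤ (i:ℕ)
    · simp [h, hG, i.isLt]
    · simp [h]
  have step2 : ∑ i ∈ Finset.range n, (if k ≤ i then G i else 0) = ∑ i ∈ Finset.Ico k n, G i := by
    rw [← Finset.sum_filter]
    congr 1
    ext a
    simp [Finset.mem_Ico, and_comm]
  have hbig : ∑ i : Fin n, (if k ≤ (i:ℕ) then g i else 0) ≤ frobSq (W - X) := by
    rw [← h4]
    linarith [h1, h2, htrA, hkf]
  have hsmall : ∑ i ∈ Finset.Ico k (min m n), (sval W i) ^ 2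
      ≤ ∑ i : Fin n, (if k ≤ (i:ℕ) then g i else 0) := by
    rw [step1, step2]
    calc ∑ i ∈ Finset.Ico k (min m n), (sval W i) ^ 2
        = ∑ i ∈ Finset.Ico k (min m n), G i := Finset.sum_congr rfl h5
      _ ≤ ∑ i ∈ Finset.Ico k n, G i := h6
  exact le_trans hsmall hbig
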